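/- Let G be a finite connected graph with n vertices and m (undirected) edges. The space of vectors x ∈ C^{2m} with τ x = −x satisfying (δ_t − δ_s) D^{-1} (δ_t* − δ_s*) x = 0 has dimension β = m − n + 1 (the first Betti number of G). -/

import Mathlib

open Matrix BigOperators
open scoped Classical Kronecker

noncomputable section

variable {V E : Type*} [Fintype V] [Fintype E] [DecidableEq V] [DecidableEq E]

/-- Incidence indicator matrix: entry `(v, e)` is `1` iff `f e = v`. -/
def incMat (f : E → V) : Matrix V E ℂ :=
  Matrix.of fun v e => if f e = v then 1 else 0

/-- Edge-reversal permutation matrix. -/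
def revMat (rev : E → E) : Matrix E E ℂ :=
  Matrix.of fun e f => if f = rev e then 1 else 0

/-- Degree of a vertex (number of oriented edges terminating there). -/
def deg (t : E → V) (v : V) : ℕ :=
  Finset.card (Finset.univ.filter fun e => t e = v)

/-- Diagonal degree matrix. -/
def degMat (t : E → V) : Matrix V V ℂ :=
  Matrix.diagonal fun v => (deg t v : ℂ)

/-- The bond-scattering matrix `S = 2 δ_s D⁻¹ δ_t* − τ`. -/
def bondS (s t : E → V) (rev : E → E) : Matrix E E ℂ :=
  (2 : ℂ) • ((incMat s).transpose * (degMat t)⁻¹ * incMat t) - revMat rev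

/-!
Write `∂ = δ_t − δ_s`. Since `∂` has real entries and `D⁻¹` is positive definite, the Laplacian
`∂ᴴ D⁻¹ ∂` has the same kernel as `∂`. The τ-symmetric vectors lie in `ker ∂` and form a space
of dimension `m` (one coordinate per undirected edge); `τ + 1` maps `ker ∂` onto them with kernel
the τ-antisymmetric part, whose dimension is therefore `dim ker ∂ − m`. Connectedness makes
`ker ∂ᵀ` the constants, so `rank ∂ = n − 1` and `dim ker ∂ = 2m − n + 1`.
-/

open ComplexOrder

theorem Matrix.ker_mulVecLin_conjTranspose_mul_mul_self {m n R : Type*} [Fintype m] [Fintype n]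
    [CommRing R] [PartialOrder R] [StarRing R] {M : Matrix m m R} (hM : M.PosDef)
    (A : Matrix m n R) :
    LinearMap.ker (Aᴴ * M * A).mulVecLin = LinearMap.ker A.mulVecLin := by
  ext x
  simp only [LinearMap.mem_ker, mulVecLin_apply, ← mulVec_mulVec]
  refine ⟨fun hx => ?_, fun hx => by rw [hx, mulVec_zero, mulVec_zero]⟩
  by_contra hAx
  have hpos := hM.dotProduct_mulVec_pos hAx
  rw [star_mulVec, ← dotProduct_mulVec, hx, dotProduct_zero] at hpos
  exact hpos.false

section Involution

variable {E : Type*} [Fintype E] [DecidableEq E] {rev : E → E}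

theorem revMat_mulVec (x : E → ℂ) : revMat rev *ᵥ x = x ∘ rev := by
  ext e
  simp [revMat, mulVec, dotProduct]

theorem mem_ker_revMat_sub_one {x : E → ℂ} :
    x ∈ LinearMap.ker (revMat rev - 1).mulVecLin ↔ x ∘ rev = x := by
  rw [LinearMap.mem_ker, mulVecLin_apply, sub_mulVec, one_mulVec, revMat_mulVec, sub_eq_zero]

/-- The quotient by this relation is the set of undirected edges. -/
def revSetoid (hrev : Function.Involutive rev) : Setoid E where
  r a b := a = b ∨ a = rev b
  iseqv :=
    { refl := fun _ => Or.inl rfl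
      symm := by
        rintro a b (rfl | rfl)
        exacts [Or.inl rfl, Or.inr (hrev b).symm]
      trans := by
        rintro a b c (rfl | rfl) (rfl | rfl)
        exacts [Or.inl rfl, Or.inr rfl, Or.inr rfl, Or.inl (hrev c)] }

theorem card_eq_two_mul_card_quotient_revSetoid (hrev : Function.Involutive rev)
    (hne : ∀ e, rev e ≠ e) :
    Fintype.card E = 2 * Fintype.card (Quotient (revSetoid hrev)) := by
  have hfiber : ∀ q : Quotient (revSetoid hrev),
      (Finset.univ.filter fun e => Quotient.mk _ e = q).card = 2 := by
    refine Quotient.ind fun e => ?_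
    have : (Finset.univ.filter fun a => Quotient.mk (revSetoid hrev) a = Quotient.mk _ e)
        = {e, rev e} := by
      ext a
      simp only [Finset.mem_filter, Finset.mem_univ, true_and, Quotient.eq,
        Finset.mem_insert, Finset.mem_singleton]
      exact Iff.rfl
    rw [this, Finset.card_pair (hne e).symm]
  rw [← Finset.card_univ, Finset.card_eq_sum_card_fiberwise (fun e _ => Finset.mem_univ
    (Quotient.mk (revSetoid hrev) e)), Finset.sum_congr rfl fun q _ => hfiber q,
    Finset.sum_const, Finset.card_univ, smul_eq_mul, mul_comm]

theorem range_funLeft_quotient_mk (hrev : Function.Involutive rev) :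
    LinearMap.range (LinearMap.funLeft ℂ ℂ (Quotient.mk (revSetoid hrev)))
      = LinearMap.ker (revMat rev - 1).mulVecLin := by
  ext x
  rw [LinearMap.mem_range, mem_ker_revMat_sub_one]
  constructor
  · rintro ⟨y, rfl⟩
    exact funext fun e => congrArg y (Quotient.sound (Or.inr rfl))
  · intro hx
    refine ⟨Quotient.lift x ?_, rfl⟩
    rintro a b (rfl | rfl)
    exacts [rfl, congrFun hx b]

theorem two_mul_finrank_ker_revMat_sub_one (hrev : Function.Involutive rev)
    (hne : ∀ e, rev e ≠ e) :
    2 * Module.finrank ℂ (LinearMap.ker (revMat rev - 1).mulVecLin) = Fintype.card E := by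
  rw [← range_funLeft_quotient_mk hrev, LinearMap.finrank_range_of_inj
    (LinearMap.funLeft_injective_of_surjective _ _ _ Quotient.mk_surjective),
    Module.finrank_fintype_fun_eq_card, card_eq_two_mul_card_quotient_revSetoid hrev hne]

/-- `τ + 1` maps `K` onto the τ-symmetric vectors, with kernel the τ-antisymmetric part of `K`. -/
theorem finrank_ker_revMat_add_one_inf_add (hrev : Function.Involutive rev)
    {K : Submodule ℂ (E → ℂ)} (hK : LinearMap.ker (revMat rev - 1).mulVecLin ≤ K) :
    Module.finrank ℂ ↥(LinearMap.ker (revMat rev + 1).mulVecLin ⊓ K)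
      + Module.finrank ℂ (LinearMap.ker (revMat rev - 1).mulVecLin) = Module.finrank ℂ K := by
  set ψ := (revMat rev + 1).mulVecLin
  have hψ : ∀ x, ψ x = x ∘ rev + x := fun x => by
    rw [mulVecLin_apply, add_mulVec, one_mulVec, revMat_mulVec]
  have hker : LinearMap.ker (ψ ∘ₗ K.subtype) = (ψ.ker ⊓ K).comap K.subtype := by
    rw [LinearMap.ker_comp, Submodule.comap_inf, Submodule.comap_subtype_self, inf_top_eq]
  have hrange : LinearMap.range (ψ ∘ₗ K.subtype) = LinearMap.ker (revMat rev - 1).mulVecLin := by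
    refine le_antisymm ?_ fun y hy => ?_
    · rintro _ ⟨x, rfl⟩
      rw [mem_ker_revMat_sub_one, LinearMap.comp_apply, hψ]
      exact funext fun e => by simp [hrev e, add_comm]
    · refine ⟨⟨(2 : ℂ)⁻¹ • y, K.smul_mem _ (hK hy)⟩, ?_⟩
      rw [LinearMap.comp_apply, Submodule.subtype_apply, map_smul, hψ,
        mem_ker_revMat_sub_one.mp hy, ← two_smul ℂ y, smul_smul, inv_mul_cancel₀ two_ne_zero,
        one_smul]
  rw [← LinearMap.finrank_range_add_finrank_ker (ψ ∘ₗ K.subtype), hrange, hker,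
    (Submodule.comapSubtypeEquivOfLe inf_le_right).finrank_eq, add_comm]

end Involution

section Incidence

variable {V E : Type*} [DecidableEq V]

theorem conjTranspose_incMat (f : E → V) : (incMat f)ᴴ = (incMat f)ᵀ := by
  ext e v
  simp [incMat, apply_ite]

theorem incMat_transpose_mulVec [Fintype V] (f : E → V) (g : V → ℂ) :
    (incMat f)ᵀ *ᵥ g = g ∘ f := by
  ext e
  simp [incMat, mulVec, dotProduct]

theorem incMat_comp_mulVec_comp [Fintype E] (f : E → V) (σ : E ≃ E) (x : E → ℂ) :
    incMat (f ∘ σ) *ᵥ (x ∘ σ) = incMat f *ᵥ x := by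
  ext v
  simp only [incMat, mulVec, dotProduct, of_apply, Function.comp_apply]
  exact σ.sum_comp fun e => (if f e = v then 1 else 0) * x e

theorem posDef_degMat_inv [Fintype V] [Fintype E] {t : E → V} (hd : ∀ v, 0 < deg t v) :
    (degMat t)⁻¹.PosDef :=
  (PosDef.diagonal fun v => by exact_mod_cast hd v).inv

/-- `δ_t − δ_s`: the boundary of an oriented edge is its head minus its tail. -/
def boundaryMat (s t : E → V) : Matrix V E ℂ := incMat t - incMat s

theorem conjTranspose_boundaryMat (s t : E → V) :
    (boundaryMat s t)ᴴ = (incMat t)ᵀ - (incMat s)ᵀ := by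
  rw [boundaryMat, conjTranspose_sub, conjTranspose_incMat, conjTranspose_incMat]

theorem boundaryMat_transpose_mulVec [Fintype V] (s t : E → V) (g : V → ℂ) :
    (boundaryMat s t)ᵀ *ᵥ g = g ∘ t - g ∘ s := by
  rw [boundaryMat, transpose_sub, sub_mulVec, incMat_transpose_mulVec, incMat_transpose_mulVec]

theorem ker_revMat_sub_one_le_ker_boundaryMat [Fintype E] [DecidableEq E] {s t : E → V}
    {rev : E → E} (hrev : Function.Involutive rev) (htr : ∀ e, t (rev e) = s e) :
    LinearMap.ker (revMat rev - 1).mulVecLin ≤ LinearMap.ker (boundaryMat s t).mulVecLin := by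
  intro x hx
  have hs : incMat s *ᵥ x = incMat t *ᵥ x := by
    rw [← incMat_comp_mulVec_comp t hrev.toPerm x, Function.Involutive.coe_toPerm,
      mem_ker_revMat_sub_one.mp hx, show t ∘ rev = s from funext htr]
  rw [LinearMap.mem_ker, mulVecLin_apply, boundaryMat, sub_mulVec, hs, sub_self]

theorem finrank_ker_boundaryMat_transpose [Fintype V] [Fintype E] [Nonempty V] {s t : E → V}
    (hconn : ∀ a b : V, Relation.ReflTransGen (fun p q => ∃ e, s e = p ∧ t e = q) a b) :
    Module.finrank ℂ (LinearMap.ker (boundaryMat s t)ᵀ.mulVecLin) = 1 := by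
  suffices LinearMap.ker (boundaryMat s t)ᵀ.mulVecLin = ℂ ∙ 1 by
    rw [this, finrank_span_singleton one_ne_zero]
  refine le_antisymm (fun g hg => ?_) ?_
  · rw [LinearMap.mem_ker, mulVecLin_apply, boundaryMat_transpose_mulVec, sub_eq_zero] at hg
    have hconst : ∀ a b, g a = g b := fun a b => by
      induction hconn a b with
      | refl => rfl
      | tail _ hedge ih =>
        obtain ⟨e, rfl, rfl⟩ := hedge
        exact ih.trans (congrFun hg e).symm
    obtain ⟨a⟩ := ‹Nonempty V›
    exact Submodule.mem_span_singleton.mpr ⟨g a, funext fun b => by simp [hconst a b]⟩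
  · rw [Submodule.span_le, Set.singleton_subset_iff, SetLike.mem_coe, LinearMap.mem_ker,
      mulVecLin_apply, boundaryMat_transpose_mulVec]
    exact sub_eq_zero.mpr rfl

theorem finrank_ker_boundaryMat_add_card [Fintype V] [Fintype E] [Nonempty V] {s t : E → V}
    (hconn : ∀ a b : V, Relation.ReflTransGen (fun p q => ∃ e, s e = p ∧ t e = q) a b) :
    Module.finrank ℂ (LinearMap.ker (boundaryMat s t).mulVecLin) + Fintype.card V
      = Fintype.card E + 1 := by
  have hA := LinearMap.finrank_range_add_finrank_ker (boundaryMat s t).mulVecLin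
  have hAt := LinearMap.finrank_range_add_finrank_ker (boundaryMat s t)ᵀ.mulVecLin
  have hrank : (boundaryMat s t)ᵀ.rank = (boundaryMat s t).rank := rank_transpose _
  rw [finrank_ker_boundaryMat_transpose hconn] at hAt
  simp only [rank, Module.finrank_fintype_fun_eq_card] at hA hAt hrank
  omega

end Incidence

theorem stmt10_general [Nonempty V] (s t : E → V) (rev : E → E)
    (hrev : Function.Involutive rev) (hne : ∀ e, rev e ≠ e)
    (htr : ∀ e, t (rev e) = s e)
    (hd : ∀ v, 0 < deg t v)
    (hconn : ∀ a b : V, Relation.ReflTransGen (fun p q => ∃ e, s e = p ∧ t e = q) a b) :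
    Module.finrank ℂ
        ↥(LinearMap.ker (Matrix.mulVecLin (revMat rev + 1)) ⊓
          LinearMap.ker (Matrix.mulVecLin
            (((incMat t).transpose - (incMat s).transpose) * (degMat t)⁻¹ *
              (incMat t - incMat s))))
      + Fintype.card V = Fintype.card E / 2 + 1 := by
  rw [← conjTranspose_boundaryMat, show incMat t - incMat s = boundaryMat s t from rfl,
    ker_mulVecLin_conjTranspose_mul_mul_self (posDef_degMat_inv hd)]
  have hanti := finrank_ker_revMat_add_one_inf_add hrev
    (ker_revMat_sub_one_le_ker_boundaryMat (s := s) (t := t) hrev htr)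
  have hsym := two_mul_finrank_ker_revMat_sub_one hrev hne
  have hker := finrank_ker_boundaryMat_add_card hconn
  omega

/-- For a finite connected graph with `n` vertices and `m` undirected edges
(`2m` oriented edges), the space of τ-antisymmetric harmonic 1-forms has
dimension `β = m − n + 1`, stated additively as `dim + n = m + 1`. -/
theorem stmt10 [Nonempty V] (s t : E → V) (rev : E → E)
    (hrev : Function.Involutive rev) (hne : ∀ e, rev e ≠ e)
    (hsr : ∀ e, s (rev e) = t e) (htr : ∀ e, t (rev e) = s e)
    (hd : ∀ v, 0 < deg t v)
    (hconn : ∀ a b : V, Relation.ReflTransGen (fun p q => ∃ e, s e = p ∧ t e = q) a b) :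
    Module.finrank ℂ
        ↥(LinearMap.ker (Matrix.mulVecLin (revMat rev + 1)) ⊓
          LinearMap.ker (Matrix.mulVecLin
            (((incMat t).transpose - (incMat s).transpose) * (degMat t)⁻¹ *
              (incMat t - incMat s))))
      + Fintype.card V = Fintype.card E / 2 + 1 :=
  stmt10_general s t rev hrev hne htr hd hconn
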